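/- arXiv:1307.6864 — 3 statements merged into one kernel-verified Lean document; each statement's English description precedes it below -/
import Mathlib

section
/- Let X ∈ ℂ^{n×n} be Hermitian and v ∈ ℂⁿ be such that ‖X − v v*‖ < ‖v‖²/2 in spectral norm. Let η₁ be the largest eigenvalue of X, x₁ an associated unit-norm eigenvector, and set x = x₁·‖v‖. Then ‖x·‖x‖ − e^{iα}·v·‖v‖‖ ≤ 2√2·‖X − v v*‖ for some α ∈ [0, 2π). -/
open scoped BigOperators

/-- Euclidean norm of a complex vector. -/
noncomputable def euclNorm {n : ℕ} (x : Fin n → ℂ) : ℝ := Real.sqrt (∑ i, ‖x i‖ ^ 2)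

/-- Spectral (ℓ²-operator) norm of a complex matrix. -/
noncomputable def specNorm {m n : ℕ} (M : Matrix (Fin m) (Fin n) ℂ) : ℝ :=
  ‖LinearMap.toContinuousLinearMap (Matrix.toEuclideanLin M)‖

/-- The rank-one matrix v v*. -/
def outer {n : ℕ} (v : Fin n → ℂ) : Matrix (Fin n) (Fin n) ℂ :=
  Matrix.of fun i j => v i * (starRingEnd ℂ) (v j)

/-!
Write `ε = ‖X - v v*‖`, `N = ‖v‖` and `t = |⟪v, x₁⟫|`. The Rayleigh quotient of `X` at `v` is at
least `N² - ε`, so `η₁ ≥ N² - ε > N² / 2`. Applying `X - v v*` to `x₁` gives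
`‖η₁ x₁ - ⟪v, x₁⟫ v‖ ≤ ε`, and expanding this norm shows `η₁² (N² - t²) ≤ N² ε²`: the part of `x₁`
orthogonal to `v` is small. Once the phase `e^{iα}` of `⟪v, x₁⟫` is matched,
`‖N x₁ - e^{iα} v‖² = 2N (N - t) ≤ 2 (N² - t²)`, and combining with `N² ≤ 2 η₁` gives
`N² ‖N x₁ - e^{iα} v‖ ≤ 2√2 ε`.
-/

open scoped InnerProductSpace

section RCLike

variable {𝕜 E : Type*} [RCLike 𝕜] [NormedAddCommGroup E] [InnerProductSpace 𝕜 E]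

theorem LinearMap.IsSymmetric.exists_hasEigenvalue_re_inner_le [FiniteDimensional 𝕜 E]
    {T : E →ₗ[𝕜] E} (hT : T.IsSymmetric) {x : E} (hx : x ≠ 0) :
    ∃ μ : ℝ, Module.End.HasEigenvalue T μ ∧ RCLike.re ⟪T x, x⟫_𝕜 ≤ μ * ‖x‖ ^ 2 := by
  have : Nontrivial E := ⟨⟨x, 0, hx⟩⟩
  refine ⟨_, hT.hasEigenvalue_iSup_of_finiteDimensional, ?_⟩
  have hbdd : BddAbove (Set.range fun y : {y : E // y ≠ 0} ↦
      RCLike.re ⟪T y, y⟫_𝕜 / ‖(y : E)‖ ^ 2) :=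
    ⟨‖LinearMap.toContinuousLinearMap T‖, fun _ ⟨y, hy⟩ ↦ hy ▸
      (le_abs_self _).trans ((LinearMap.toContinuousLinearMap T).rayleighQuotient_le_norm y)⟩
  rw [← div_le_iff₀ (by positivity)]
  exact le_ciSup hbdd ⟨x, hx⟩

theorem norm_pow_four_sub_mul_le_re_inner (T : E →L[𝕜] E) (v : E) :
    ‖v‖ ^ 4 - ‖T - InnerProductSpace.rankOne 𝕜 v v‖ * ‖v‖ ^ 2 ≤ RCLike.re ⟪T v, v⟫_𝕜 := by
  set A := T - InnerProductSpace.rankOne 𝕜 v v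
  have hT : T v = ⟪v, v⟫_𝕜 • v + A v := by simp [A]
  have hA : |RCLike.re ⟪A v, v⟫_𝕜| ≤ ‖A‖ * ‖v‖ ^ 2 :=
    calc |RCLike.re ⟪A v, v⟫_𝕜| ≤ ‖A v‖ * ‖v‖ :=
          (RCLike.abs_re_le_norm _).trans (norm_inner_le_norm _ _)
      _ ≤ ‖A‖ * ‖v‖ * ‖v‖ := by gcongr; exact A.le_opNorm v
      _ = ‖A‖ * ‖v‖ ^ 2 := by ring
  have hvv : RCLike.re ⟪⟪v, v⟫_𝕜 • v, v⟫_𝕜 = ‖v‖ ^ 4 := by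
    rw [inner_smul_left, inner_self_eq_norm_sq_to_K]
    simp only [map_pow, RCLike.conj_ofReal]
    norm_cast
    ring
  rw [hT, inner_add_left, map_add, hvv]
  linarith [neg_abs_le (RCLike.re ⟪A v, v⟫_𝕜)]

theorem norm_sq_sub_le_of_forall_hasEigenvalue_le [FiniteDimensional 𝕜 E] (T : E →L[𝕜] E)
    (hT : (T : E →ₗ[𝕜] E).IsSymmetric) {v : E} (hv : v ≠ 0) {η : ℝ}
    (hη : ∀ μ : ℝ, Module.End.HasEigenvalue (T : E →ₗ[𝕜] E) μ → μ ≤ η) :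
    ‖v‖ ^ 2 - ‖T - InnerProductSpace.rankOne 𝕜 v v‖ ≤ η := by
  obtain ⟨μ, hμ, hμv⟩ := hT.exists_hasEigenvalue_re_inner_le hv
  refine le_of_mul_le_mul_right ?_ (by positivity : 0 < ‖v‖ ^ 2)
  calc (‖v‖ ^ 2 - ‖T - InnerProductSpace.rankOne 𝕜 v v‖) * ‖v‖ ^ 2
      ≤ RCLike.re ⟪T v, v⟫_𝕜 := by linarith [norm_pow_four_sub_mul_le_re_inner T v]
    _ ≤ μ * ‖v‖ ^ 2 := hμv
    _ ≤ η * ‖v‖ ^ 2 := by gcongr; exact hη μ hμ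

end RCLike

section Complex

open Complex

theorem exists_mem_Ico_exp_mul_I_eq (θ : ℝ) :
    ∃ α ∈ Set.Ico 0 (2 * Real.pi), exp (α * I) = exp (θ * I) := by
  refine ⟨toIcoMod Real.two_pi_pos 0 θ, toIcoMod_mem_Ico' _ θ, ?_⟩
  rw [← self_sub_toIcoDiv_zsmul]
  push_cast
  exact exp_mul_I_periodic.sub_zsmul_eq _

variable {E : Type*} [NormedAddCommGroup E] [InnerProductSpace ℂ E]

theorem norm_sq_mul_norm_smul_sub_inner_smul_sq (u v : E) (hu : ‖u‖ = 1) (η : ℝ) :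
    ‖v‖ ^ 2 * ‖(η : ℂ) • u - ⟪v, u⟫_ℂ • v‖ ^ 2 =
      η ^ 2 * (‖v‖ ^ 2 - ‖⟪v, u⟫_ℂ‖ ^ 2) + ‖⟪v, u⟫_ℂ‖ ^ 2 * (‖v‖ ^ 2 - η) ^ 2 := by
  have hre : RCLike.re ⟪(η : ℂ) • u, ⟪v, u⟫_ℂ • v⟫_ℂ = η * ‖⟪v, u⟫_ℂ‖ ^ 2 := by
    rw [inner_smul_left, inner_smul_right, ← inner_conj_symm u v, conj_ofReal,
      mul_conj, normSq_eq_norm_sq]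
    norm_cast
  rw [@norm_sub_sq ℂ, hre, norm_smul, norm_smul, hu, norm_real, Real.norm_eq_abs,
    mul_one, sq_abs]
  ring

theorem norm_norm_smul_sub_smul_sq (u v : E) (hu : ‖u‖ = 1) {φ : ℂ} (hφ : ‖φ‖ = 1) {t : ℝ}
    (hc : ⟪v, u⟫_ℂ = t * φ) :
    ‖(‖v‖ : ℂ) • u - φ • v‖ ^ 2 = 2 * ‖v‖ * (‖v‖ - t) := by
  have hre : RCLike.re ⟪(‖v‖ : ℂ) • u, φ • v⟫_ℂ = ‖v‖ * t := by
    rw [inner_smul_left, inner_smul_right, ← inner_conj_symm u v, hc, conj_ofReal,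
      map_mul (starRingEnd ℂ), conj_ofReal, mul_left_comm φ, mul_conj, normSq_eq_norm_sq, hφ]
    simp
  rw [@norm_sub_sq ℂ, hre, norm_smul, norm_smul, hu, hφ, norm_real, norm_norm]
  ring

theorem norm_smul_norm_smul_sub_exp_arg_smul_le (T : E →L[ℂ] E) {u v : E} {η : ℝ}
    (hu : ‖u‖ = 1) (hTu : T u = (η : ℂ) • u)
    (hη : ‖v‖ ^ 2 - ‖T - InnerProductSpace.rankOne ℂ v v‖ ≤ η)
    (hclose : ‖T - InnerProductSpace.rankOne ℂ v v‖ < ‖v‖ ^ 2 / 2) :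
    ‖(‖v‖ : ℂ) • ((‖v‖ : ℂ) • u - exp (arg ⟪v, u⟫_ℂ * I) • v)‖ ≤
      2 * Real.sqrt 2 * ‖T - InnerProductSpace.rankOne ℂ v v‖ := by
  set ε := ‖T - InnerProductSpace.rankOne ℂ v v‖
  set c := ⟪v, u⟫_ℂ
  have hN : 0 < ‖v‖ := by
    by_contra! h
    rw [norm_le_zero_iff.mp h, norm_zero] at hclose
    linarith [norm_nonneg (T - InnerProductSpace.rankOne ℂ v v)]
  have hres : ‖(η : ℂ) • u - c • v‖ ≤ ε := by
    have h := (T - InnerProductSpace.rankOne ℂ v v).le_opNorm u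
    rwa [hu, mul_one, sub_apply, hTu, InnerProductSpace.rankOne_apply] at h
  have hct : ‖c‖ ≤ ‖v‖ := by
    simpa [hu] using norm_inner_le_norm (𝕜 := ℂ) v u
  have hperp : η ^ 2 * (‖v‖ ^ 2 - ‖c‖ ^ 2) ≤ ‖v‖ ^ 2 * ε ^ 2 := by
    have hid : ‖v‖ ^ 2 * ‖(η : ℂ) • u - c • v‖ ^ 2 =
        η ^ 2 * (‖v‖ ^ 2 - ‖c‖ ^ 2) + ‖c‖ ^ 2 * (‖v‖ ^ 2 - η) ^ 2 :=
      norm_sq_mul_norm_smul_sub_inner_smul_sq u v hu η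
    have hsq : ‖(η : ℂ) • u - c • v‖ ^ 2 ≤ ε ^ 2 := by gcongr
    nlinarith [mul_le_mul_of_nonneg_left hsq (sq_nonneg ‖v‖),
      mul_nonneg (sq_nonneg ‖c‖) (sq_nonneg (‖v‖ ^ 2 - η))]
  have hgap : ‖v‖ ^ 2 * (‖v‖ ^ 2 - ‖c‖ ^ 2) ≤ 4 * ε ^ 2 := by
    have h4 : ‖v‖ ^ 4 * (‖v‖ ^ 2 - ‖c‖ ^ 2) ≤ ‖v‖ ^ 2 * (4 * ε ^ 2) := by
      have hsq : (‖v‖ ^ 2) ^ 2 ≤ (2 * η) ^ 2 := by gcongr; linarith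
      have hd : 0 ≤ ‖v‖ ^ 2 - ‖c‖ ^ 2 := by nlinarith [norm_nonneg c]
      nlinarith [mul_le_mul_of_nonneg_right hsq hd]
    have hN2 : 0 < ‖v‖ ^ 2 := by positivity
    nlinarith
  have hphase := norm_norm_smul_sub_smul_sq u v hu (norm_exp_ofReal_mul_I (arg c))
    (norm_mul_exp_arg_mul_I c).symm
  rw [norm_smul, norm_real, norm_norm]
  refine (pow_le_pow_iff_left₀ (by positivity) (by positivity) two_ne_zero).mp ?_
  calc (‖v‖ * ‖(‖v‖ : ℂ) • u - exp (arg c * I) • v‖) ^ 2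
      = ‖v‖ ^ 2 * (2 * ‖v‖ * (‖v‖ - ‖c‖)) := by rw [mul_pow, hphase]
    _ ≤ 2 * (‖v‖ ^ 2 * (‖v‖ ^ 2 - ‖c‖ ^ 2)) := by
        nlinarith [mul_nonneg (sq_nonneg ‖v‖) (mul_nonneg (norm_nonneg c) (sub_nonneg.mpr hct))]
    _ ≤ 2 * (4 * ε ^ 2) := by gcongr
    _ = (2 * Real.sqrt 2 * ε) ^ 2 := by
        rw [mul_pow, mul_pow, Real.sq_sqrt zero_le_two]; ring

end Complex

theorem euclNorm_eq_norm_toLp {n : ℕ} (y : Fin n → ℂ) : euclNorm y = ‖WithLp.toLp 2 y‖ := by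
  rw [euclNorm, EuclideanSpace.norm_eq]

theorem toEuclideanLin_outer {n : ℕ} (v : Fin n → ℂ) :
    Matrix.toEuclideanLin (outer v) =
      (InnerProductSpace.rankOne ℂ (WithLp.toLp 2 v) (WithLp.toLp 2 v) : _ →ₗ[ℂ] _) := by
  ext y i
  simp [outer, Matrix.mulVec, dotProduct, PiLp.inner_apply, Finset.mul_sum, mul_comm,
    mul_left_comm]

theorem specNorm_sub_outer {n : ℕ} (X : Matrix (Fin n) (Fin n) ℂ) (v : Fin n → ℂ) :
    specNorm (X - outer v) = ‖LinearMap.toContinuousLinearMap (Matrix.toEuclideanLin X) -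
      InnerProductSpace.rankOne ℂ (WithLp.toLp 2 v) (WithLp.toLp 2 v)‖ := by
  rw [specNorm, map_sub, toEuclideanLin_outer, map_sub]
  rfl

theorem stmt_10 {n : ℕ}
    (X : Matrix (Fin n) (Fin n) ℂ) (hX : X.IsHermitian)
    (v : Fin n → ℂ) (hv : v ≠ 0)
    -- assumption : ‖X − v v*‖ < ‖v‖² / 2
    (hclose : specNorm (X - outer v) < euclNorm v ^ 2 / 2)
    -- η₁ the largest eigenvalue of X, x₁ an associated unit-norm eigenvector
    (η₁ : ℝ) (x₁ : Fin n → ℂ) (hx₁ : euclNorm x₁ = 1)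
    (heig : X.mulVec x₁ = (η₁ : ℂ) • x₁)
    (htop : ∀ (c : ℝ) (w : Fin n → ℂ), w ≠ 0 → X.mulVec w = (c : ℂ) • w → c ≤ η₁)
    -- x = x₁ · ‖v‖
    (x : Fin n → ℂ) (hx : x = fun i => (euclNorm v : ℂ) * x₁ i) :
    ∃ α ∈ Set.Ico (0 : ℝ) (2 * Real.pi),
      euclNorm (fun i => (euclNorm x : ℂ) * x i
          - Complex.exp (Complex.I * α) * ((euclNorm v : ℂ) * v i)) ≤
        2 * Real.sqrt 2 * specNorm (X - outer v) := by
  set V := WithLp.toLp 2 v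
  set U := WithLp.toLp 2 x₁
  set T := LinearMap.toContinuousLinearMap (Matrix.toEuclideanLin X)
  rw [specNorm_sub_outer, euclNorm_eq_norm_toLp v] at hclose ⊢
  rw [euclNorm_eq_norm_toLp] at hx₁
  have hη : ‖V‖ ^ 2 - ‖T - InnerProductSpace.rankOne ℂ V V‖ ≤ η₁ := by
    refine norm_sq_sub_le_of_forall_hasEigenvalue_le T
      (Matrix.isSymmetric_toEuclideanLin_iff.mpr hX) (fun h ↦ hv (congrArg WithLp.ofLp h))
      fun μ hμ ↦ ?_
    obtain ⟨w, hw⟩ := hμ.exists_hasEigenvector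
    exact htop μ w.ofLp (fun h ↦ hw.2 (congrArg (WithLp.toLp 2) h))
      (congrArg WithLp.ofLp hw.apply_eq_smul)
  have hxN : euclNorm x = ‖V‖ := by
    rw [hx, euclNorm_eq_norm_toLp, euclNorm_eq_norm_toLp v,
      show WithLp.toLp 2 (fun i ↦ (‖V‖ : ℂ) * x₁ i) = (‖V‖ : ℂ) • U from rfl, norm_smul, hx₁]
    simp
  obtain ⟨α, hα, hexp⟩ := exists_mem_Ico_exp_mul_I_eq (Complex.arg ⟪V, U⟫_ℂ)
  refine ⟨α, hα, ?_⟩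
  have hvec :
      (fun i ↦ (euclNorm x : ℂ) * x i - Complex.exp (Complex.I * α) * ((‖V‖ : ℂ) * v i)) =
        WithLp.ofLp ((‖V‖ : ℂ) •
          ((‖V‖ : ℂ) • U - Complex.exp (Complex.arg ⟪V, U⟫_ℂ * Complex.I) • V)) := by
    rw [mul_comm Complex.I, hexp, hxN, hx, euclNorm_eq_norm_toLp v]
    ext i
    simp only [WithLp.ofLp_smul, WithLp.ofLp_sub, Pi.smul_apply, Pi.sub_apply, smul_eq_mul]
    ring
  rw [hvec, euclNorm_eq_norm_toLp, WithLp.toLp_ofLp]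
  exact norm_smul_norm_smul_sub_exp_arg_smul_le T hx₁ (congrArg (WithLp.toLp 2) heig) hη hclose
end

section
/- Let X ∈ ℂ^{n×n} be Hermitian and v ∈ ℂⁿ be such that ‖X − v v*‖ < ‖v‖²/2 in spectral norm. Let η₁ be the largest eigenvalue of X, x₁ an associated unit-norm eigenvector, and set x = x₁·√η₁ (η₁ > 0 under the stated assumption). Then ‖x·‖x‖ − e^{iα}·v·‖v‖‖ ≤ 2√2·‖X − v v*‖ for some α ∈ [0, 2π). -/
open scoped BigOperators

/-- Euclidean norm of a complex vector. -/
noncomputable def cenorm {n : ℕ} (x : Fin n → ℂ) : ℝ := Real.sqrt (∑ i, ‖x i‖ ^ 2)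

/-!
Write `ε = ‖X - v v*‖`, `τ = ‖v‖` and `a = ⟪v, x₁⟫`. The Rayleigh quotient of `X` at `v` gives
`η₁ ≥ τ² - ε`, and `(X - v v*) x₁ = η₁ x₁ - a v` gives `‖η₁ x₁ - a v‖ ≤ ε`. Since `‖x‖ x = η₁ x₁`,
choosing `e^{iα}` to be the phase of `a` makes the squared distance `η₁² - 2 η₁ τ |a| + τ⁴`, which
these two estimates bound by `8 ε²` through elementary real algebra.
-/

open RCLike Module.End WithLp
open scoped InnerProductSpace ComplexConjugate

theorem sq_sub_two_mul_mul_add_pow_four_le {η τ b ε : ℝ} (hb : 0 ≤ b) (hbτ : b ≤ τ) (hε : 0 ≤ ε)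
    (hη : τ ^ 2 - ε ≤ η) (hres : η ^ 2 - 2 * η * b ^ 2 + b ^ 2 * τ ^ 2 ≤ ε ^ 2) :
    η ^ 2 - 2 * η * τ * b + τ ^ 4 ≤ 8 * ε ^ 2 := by
  have hτb : 0 ≤ τ - b := sub_nonneg.mpr hbτ
  -- `hres` reads `(η - b²)² + b² (τ² - b²) ≤ ε²`
  have hsq : (η - b ^ 2) ^ 2 ≤ ε ^ 2 := by
    nlinarith [mul_nonneg (sq_nonneg b) (mul_nonneg hτb (add_nonneg hb (hb.trans hbτ)))]
  have hb2 : -ε ≤ η - b ^ 2 := (abs_le_of_sq_le_sq' hsq hε).1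
  have h1 : τ * (τ - b) ≤ 2 * ε := by nlinarith [mul_nonneg hb hτb]
  have h2 : b * (τ - b) ≤ ε := by nlinarith [sq_nonneg (τ - b)]
  nlinarith [mul_le_mul h1 h1 (mul_nonneg (hb.trans hbτ) hτb) (by linarith),
    mul_le_mul_of_nonneg_left h2 hε, mul_nonneg (mul_nonneg hb hτb) (sub_nonneg.mpr hη)]

namespace Complex

theorem exists_mem_Ico_norm_mul_exp_eq (z : ℂ) :
    ∃ α ∈ Set.Ico 0 (2 * Real.pi), (‖z‖ : ℂ) * exp (I * α) = z := by
  refine ⟨toIcoMod Real.two_pi_pos 0 z.arg,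
    by simpa using toIcoMod_mem_Ico Real.two_pi_pos 0 z.arg, ?_⟩
  rw [toIcoMod, ofReal_sub, ofReal_zsmul, ofReal_mul, ofReal_ofNat, mul_comm I,
    exp_mul_I_periodic.sub_zsmul_eq, norm_mul_exp_arg_mul_I]

end Complex

section InnerProductSpace

variable {𝕜 E : Type*} [RCLike 𝕜] [NormedAddCommGroup E] [InnerProductSpace 𝕜 E]

namespace LinearMap.IsSymmetric

variable [FiniteDimensional 𝕜 E] {T : E →ₗ[𝕜] E} {η : ℝ}

theorem re_inner_le_of_forall_hasEigenvalue_le (hT : T.IsSymmetric)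
    (hη : ∀ μ : ℝ, HasEigenvalue T μ → μ ≤ η) (y : E) : re ⟪T y, y⟫_𝕜 ≤ η * ‖y‖ ^ 2 := by
  rcases eq_or_ne y 0 with rfl | hy
  · simp
  have : Nontrivial E := ⟨⟨y, 0, hy⟩⟩
  have hbdd : BddAbove (Set.range fun x : {x : E // x ≠ 0} => re ⟪T x, x⟫_𝕜 / ‖(x : E)‖ ^ 2) := by
    refine ⟨‖LinearMap.toContinuousLinearMap T‖, ?_⟩
    rintro _ ⟨x, rfl⟩
    exact (le_abs_self _).trans ((LinearMap.toContinuousLinearMap T).rayleighQuotient_le_norm x)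
  have hquot := (le_ciSup hbdd ⟨y, hy⟩).trans (hη _ hT.hasEigenvalue_iSup_of_finiteDimensional)
  rwa [div_le_iff₀ (by positivity)] at hquot

theorem sq_norm_sub_le_of_forall_hasEigenvalue_le (hT : T.IsSymmetric)
    (hη : ∀ μ : ℝ, HasEigenvalue T μ → μ ≤ η) {v : E} (hv : v ≠ 0) {ε : ℝ}
    (hres : ‖T v - ⟪v, v⟫_𝕜 • v‖ ≤ ε * ‖v‖) : ‖v‖ ^ 2 - ε ≤ η := by
  have hv2 : 0 < ‖v‖ ^ 2 := by positivity
  have hsplit : re ⟪T v, v⟫_𝕜 = re ⟪T v - ⟪v, v⟫_𝕜 • v, v⟫_𝕜 + ‖v‖ ^ 2 * ‖v‖ ^ 2 := by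
    rw [inner_sub_left, inner_smul_left, inner_self_eq_norm_sq_to_K, map_sub, ← ofReal_pow,
      conj_ofReal, ← ofReal_mul, ofReal_re]
    ring
  have hres' : -(ε * ‖v‖ ^ 2) ≤ re ⟪T v - ⟪v, v⟫_𝕜 • v, v⟫_𝕜 := by
    have habs := (abs_re_le_norm _).trans ((norm_inner_le_norm (𝕜 := 𝕜) (T v - ⟪v, v⟫_𝕜 • v) v).trans
      (mul_le_mul_of_nonneg_right hres (norm_nonneg v)))
    nlinarith [abs_le.mp habs]
  have hrayleigh := hT.re_inner_le_of_forall_hasEigenvalue_le hη v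
  nlinarith

end LinearMap.IsSymmetric

theorem norm_ofReal_smul_sub_smul_sq {x : E} (hx : ‖x‖ = 1) (η : ℝ) (c : 𝕜) (v : E) :
    ‖(η : 𝕜) • x - c • v‖ ^ 2 = η ^ 2 - 2 * η * re (c * ⟪x, v⟫_𝕜) + ‖c‖ ^ 2 * ‖v‖ ^ 2 := by
  rw [@norm_sub_sq 𝕜, inner_smul_left, inner_smul_right, conj_ofReal, mul_assoc, re_ofReal_mul,
    norm_smul, norm_smul, norm_ofReal, hx]
  simp only [mul_one, mul_pow, sq_abs]

theorem norm_ofReal_smul_sub_phase_smul_le {x v : E} (hx : ‖x‖ = 1) {η ε : ℝ}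
    (hres : ‖(η : 𝕜) • x - ⟪v, x⟫_𝕜 • v‖ ≤ ε) (hη : ‖v‖ ^ 2 - ε ≤ η)
    {φ : 𝕜} (hφ : ‖φ‖ = 1) (hφa : (‖⟪v, x⟫_𝕜‖ : 𝕜) * φ = ⟪v, x⟫_𝕜) :
    ‖(η : 𝕜) • x - (φ * ‖v‖) • v‖ ≤ 2 * √2 * ε := by
  set a := ⟪v, x⟫_𝕜
  have hxv : ⟪x, v⟫_𝕜 = conj a := (inner_conj_symm x v).symm
  have hε : 0 ≤ ε := (norm_nonneg _).trans hres
  have hbτ : ‖a‖ ≤ ‖v‖ := by simpa [hx] using norm_inner_le_norm (𝕜 := 𝕜) v x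
  have hsq_res : η ^ 2 - 2 * η * ‖a‖ ^ 2 + ‖a‖ ^ 2 * ‖v‖ ^ 2 ≤ ε ^ 2 := by
    have h := norm_ofReal_smul_sub_smul_sq hx η a v
    rw [hxv, mul_conj, ← ofReal_pow, ofReal_re] at h
    rw [← h]
    exact pow_le_pow_left₀ (norm_nonneg _) hres 2
  have hphase : φ * conj a = ‖a‖ := by
    conv_lhs => rw [← hφa]
    rw [map_mul, conj_ofReal, mul_left_comm, mul_conj, hφ, ofReal_one, one_pow, mul_one]
  have hsq : ‖(η : 𝕜) • x - (φ * ‖v‖) • v‖ ^ 2 = η ^ 2 - 2 * η * ‖v‖ * ‖a‖ + ‖v‖ ^ 4 := by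
    rw [norm_ofReal_smul_sub_smul_sq hx, hxv, mul_right_comm φ, hphase, ← ofReal_mul, ofReal_re,
      norm_mul, hφ, norm_ofReal, abs_norm]
    ring
  have hbound := sq_sub_two_mul_mul_add_pow_four_le (norm_nonneg a) hbτ hε hη hsq_res
  rw [← hsq] at hbound
  refine le_of_sq_le_sq ?_ (by positivity)
  nlinarith [Real.sq_sqrt (zero_le_two : (0 : ℝ) ≤ 2)]

end InnerProductSpace

section Matrix

open Matrix

variable {n : ℕ}

theorem cenorm_eq_norm_toLp (w : Fin n → ℂ) : cenorm w = ‖toLp 2 w‖ := by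
  rw [EuclideanSpace.norm_eq]; rfl

theorem norm_toLp_mulVec_le_specNorm {m : ℕ} (M : Matrix (Fin m) (Fin n) ℂ) (w : Fin n → ℂ) :
    ‖toLp 2 (M *ᵥ w)‖ ≤ specNorm M * ‖toLp 2 w‖ :=
  (LinearMap.toContinuousLinearMap (toEuclideanLin M)).le_opNorm (toLp 2 w)

theorem outer_mulVec (v w : Fin n → ℂ) : outer v *ᵥ w = ⟪toLp 2 v, toLp 2 w⟫_ℂ • v := by
  ext i
  simp only [outer, mulVec, dotProduct, of_apply, Pi.smul_apply, smul_eq_mul, PiLp.inner_apply,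
    Finset.sum_mul]
  exact Finset.sum_congr rfl fun j _ => by rw [RCLike.inner_apply]; ring

theorem toLp_sub_outer_mulVec (X : Matrix (Fin n) (Fin n) ℂ) (v w : Fin n → ℂ) :
    toLp 2 ((X - outer v) *ᵥ w) =
      toEuclideanLin X (toLp 2 w) - ⟪toLp 2 v, toLp 2 w⟫_ℂ • toLp 2 v := by
  rw [sub_mulVec, outer_mulVec]
  rfl

end Matrix

theorem stmt_11_general {n : ℕ}
    (X : Matrix (Fin n) (Fin n) ℂ) (hX : X.IsHermitian)
    (v : Fin n → ℂ)
    -- assumption : ‖X − v v*‖ < ‖v‖² / 2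
    (hclose : specNorm (X - outer v) < cenorm v ^ 2 / 2)
    -- η₁ the largest eigenvalue of X, x₁ an associated unit-norm eigenvector
    (η₁ : ℝ) (x₁ : Fin n → ℂ) (hx₁ : cenorm x₁ = 1)
    (heig : X.mulVec x₁ = (η₁ : ℂ) • x₁)
    (htop : ∀ (c : ℝ) (w : Fin n → ℂ), w ≠ 0 → X.mulVec w = (c : ℂ) • w → c ≤ η₁)
    -- x = x₁ · √η₁ (η₁ > 0 under the stated assumption)
    (x : Fin n → ℂ) (hx : x = fun i => (Real.sqrt η₁ : ℂ) * x₁ i) :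
    ∃ α ∈ Set.Ico (0 : ℝ) (2 * Real.pi),
      cenorm (fun i => (cenorm x : ℂ) * x i
          - Complex.exp (Complex.I * α) * ((cenorm v : ℂ) * v i)) ≤
        2 * Real.sqrt 2 * specNorm (X - outer v) := by
  set ε := specNorm (X - outer v)
  rw [cenorm_eq_norm_toLp] at hclose hx₁
  have hv : toLp 2 v ≠ 0 := by
    intro h
    rw [h, norm_zero] at hclose
    linarith [show 0 ≤ ε from norm_nonneg _]
  have htop' (μ : ℝ) (hμ : HasEigenvalue (Matrix.toEuclideanLin X) μ) : μ ≤ η₁ := by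
    obtain ⟨w, hw⟩ := hμ.exists_hasEigenvector
    exact htop μ (ofLp w) (by simpa using hw.2) (congrArg ofLp hw.apply_eq_smul)
  have hη : ‖toLp 2 v‖ ^ 2 - ε ≤ η₁ :=
    (Matrix.isSymmetric_toEuclideanLin_iff.2 hX).sq_norm_sub_le_of_forall_hasEigenvalue_le
      htop' hv (by rw [← toLp_sub_outer_mulVec]; exact norm_toLp_mulVec_le_specNorm _ _)
  have hres : ‖(η₁ : ℂ) • toLp 2 x₁ - ⟪toLp 2 v, toLp 2 x₁⟫_ℂ • toLp 2 v‖ ≤ ε := by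
    have hbound := norm_toLp_mulVec_le_specNorm (X - outer v) x₁
    rwa [toLp_sub_outer_mulVec, Matrix.toLpLin_toLp, Matrix.toLin'_apply, heig, toLp_smul, hx₁,
      mul_one] at hbound
  have hcx : cenorm x = √η₁ := by
    rw [cenorm_eq_norm_toLp, show toLp 2 x = (√η₁ : ℂ) • toLp 2 x₁ by ext; simp [hx], norm_smul,
      hx₁, mul_one, Complex.norm_real, Real.norm_of_nonneg (Real.sqrt_nonneg _)]
  obtain ⟨α, hα, hpolar⟩ := Complex.exists_mem_Ico_norm_mul_exp_eq ⟪toLp 2 v, toLp 2 x₁⟫_ℂ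
  refine ⟨α, hα, ?_⟩
  convert norm_ofReal_smul_sub_phase_smul_le hx₁ hres hη (by simp) hpolar using 1
  have hsqrt : (√η₁ : ℂ) * √η₁ = η₁ := by
    rw [← Complex.ofReal_mul, Real.mul_self_sqrt (by nlinarith)]
  rw [hcx, cenorm_eq_norm_toLp]
  congr 1
  ext i
  simp only [hx, cenorm_eq_norm_toLp, PiLp.sub_apply, PiLp.smul_apply, smul_eq_mul]
  linear_combination x₁ i * hsqrt

theorem stmt_11 {n : ℕ}
    (X : Matrix (Fin n) (Fin n) ℂ) (hX : X.IsHermitian)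
    (v : Fin n → ℂ) (hv : v ≠ 0)
    -- assumption : ‖X − v v*‖ < ‖v‖² / 2
    (hclose : specNorm (X - outer v) < cenorm v ^ 2 / 2)
    -- η₁ the largest eigenvalue of X, x₁ an associated unit-norm eigenvector
    (η₁ : ℝ) (x₁ : Fin n → ℂ) (hx₁ : cenorm x₁ = 1)
    (heig : X.mulVec x₁ = (η₁ : ℂ) • x₁)
    (htop : ∀ (c : ℝ) (w : Fin n → ℂ), w ≠ 0 → X.mulVec w = (c : ℂ) • w → c ≤ η₁)
    -- x = x₁ · √η₁ (η₁ > 0 under the stated assumption)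
    (x : Fin n → ℂ) (hx : x = fun i => (Real.sqrt η₁ : ℂ) * x₁ i) :
    ∃ α ∈ Set.Ico (0 : ℝ) (2 * Real.pi),
      cenorm (fun i => (cenorm x : ℂ) * x i
          - Complex.exp (Complex.I * α) * ((cenorm v : ℂ) * v i)) ≤
        2 * Real.sqrt 2 * specNorm (X - outer v) :=
  stmt_11_general X hX v hclose η₁ x₁ hx₁ heig htop x hx
end

section
/- Let M and M̃ be Hermitian n×n complex matrices with ‖M − M̃‖ ≤ δ in spectral norm, and let v₁ be a unit vector with M v₁ = 0. Let λ̃₁ ≤ λ̃₂ ≤ … ≤ λ̃_n be the eigenvalues of M̃ with orthonormal eigenvectors ṽ₁, …, ṽ_n, and assume 0 < λ̃₂ ≤ |λ̃_k| for all k ≥ 2. Then Σ_{k≥2} |⟨ṽ_k, v₁⟩|² ≤ δ²/λ̃₂², hence |⟨ṽ₁, v₁⟩|² ≥ 1 − δ²/λ̃₂², and if additionally δ ≤ λ̃₂ then ‖v₁ − e^{iα} ṽ₁‖ ≤ √2·δ/λ̃₂ for some α ∈ [0, 2π). -/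
/-!
Expand `v₁` in the eigenbasis of `M̃`, with coefficients `c_k = ⟨ṽ_k, v₁⟩`. Since `M v₁ = 0`,
`∑ λ̃_k² |c_k|² = ‖M̃ v₁‖² = ‖(M̃ - M) v₁‖² ≤ δ²`, and the gap `λ̃₂ ≤ |λ̃_k|` for `k ≥ 2` bounds
the tail `∑_{k ≥ 2} |c_k|²` by `δ²/λ̃₂²`; Parseval turns this into the lower bound on `|c_1|²`.
Choosing the phase `e^{iα} = c_1/|c_1|` gives `‖v₁ - e^{iα} ṽ₁‖² = 2 - 2|c_1| ≤ 2 - 2|c_1|²`,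
which is at most `2δ²/λ̃₂²`.
-/

open scoped BigOperators

/-- Euclidean norm of a complex vector. -/
noncomputable def cvecNorm {n : ℕ} (x : Fin n → ℂ) : ℝ := Real.sqrt (∑ i, ‖x i‖ ^ 2)

open Finset Complex InnerProductSpace

namespace OrthonormalBasis

variable {𝕜 E ι : Type*} [RCLike 𝕜] [NormedAddCommGroup E] [InnerProductSpace 𝕜 E] [Fintype ι]
  (b : OrthonormalBasis ι 𝕜 E)

theorem sum_erase_sq_norm_inner [DecidableEq ι] (x : E) (k₀ : ι) :
    ∑ k ∈ univ.erase k₀, ‖⟪b k, x⟫_𝕜‖ ^ 2 = ‖x‖ ^ 2 - ‖⟪b k₀, x⟫_𝕜‖ ^ 2 := by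
  rw [← b.sum_sq_norm_inner_right, ← add_sum_erase _ _ (mem_univ k₀), add_sub_cancel_left]

variable {b} {T : E →ₗ[𝕜] E} {μ : ι → 𝕜}

theorem inner_apply_of_apply_eq_smul (hT : ∀ k, T (b k) = μ k • b k) (x : E) (k : ι) :
    ⟪b k, T x⟫_𝕜 = μ k * ⟪b k, x⟫_𝕜 := by
  classical
  conv_lhs => rw [← b.sum_repr' x]
  simp [map_sum, map_smul, hT, inner_sum, inner_smul_right, b.inner_eq_ite, mul_comm (μ k)]

theorem norm_sq_apply_of_apply_eq_smul (hT : ∀ k, T (b k) = μ k • b k) (x : E) :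
    ‖T x‖ ^ 2 = ∑ k, ‖μ k‖ ^ 2 * ‖⟪b k, x⟫_𝕜‖ ^ 2 := by
  simp [← b.sum_sq_norm_inner_right, inner_apply_of_apply_eq_smul hT, mul_pow]

theorem sum_erase_sq_norm_inner_le_of_apply_eq_smul [DecidableEq ι]
    (hT : ∀ k, T (b k) = μ k • b k) (x : E) {k₀ : ι} {L : ℝ} (hL : 0 < L)
    (hgap : ∀ k ≠ k₀, L ≤ ‖μ k‖) :
    ∑ k ∈ univ.erase k₀, ‖⟪b k, x⟫_𝕜‖ ^ 2 ≤ ‖T x‖ ^ 2 / L ^ 2 := by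
  rw [le_div_iff₀ (by positivity), sum_mul, norm_sq_apply_of_apply_eq_smul hT]
  calc ∑ k ∈ univ.erase k₀, ‖⟪b k, x⟫_𝕜‖ ^ 2 * L ^ 2
      ≤ ∑ k ∈ univ.erase k₀, ‖μ k‖ ^ 2 * ‖⟪b k, x⟫_𝕜‖ ^ 2 := by
        refine sum_le_sum fun k hk => ?_
        rw [mul_comm]
        gcongr
        exact hgap k (ne_of_mem_erase hk)
    _ ≤ ∑ k, ‖μ k‖ ^ 2 * ‖⟪b k, x⟫_𝕜‖ ^ 2 :=
        sum_le_sum_of_subset_of_nonneg (subset_univ _) fun _ _ _ => by positivity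

end OrthonormalBasis

theorem Complex.exists_mem_Ico_exp_I_mul_eq (θ : ℝ) :
    ∃ α ∈ Set.Ico 0 (2 * Real.pi), exp (I * α) = exp (I * θ) := by
  refine ⟨toIcoMod Real.two_pi_pos 0 θ, toIcoMod_mem_Ico' _ _, ?_⟩
  simp only [mul_comm I]
  rw [toIcoMod, ofReal_sub, ofReal_zsmul, ofReal_mul, ofReal_ofNat]
  exact exp_mul_I_periodic.sub_zsmul_eq _

theorem Complex.exp_arg_mul_I_mul_conj (w : ℂ) : exp (arg w * I) * (starRingEnd ℂ) w = ‖w‖ := by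
  conv_lhs => rw [← norm_mul_exp_arg_mul_I w]
  rw [map_mul, ← exp_conj, conj_ofReal, map_mul, conj_ofReal, conj_I, mul_left_comm, ← exp_add]
  simp

section Phase

variable {E : Type*} [NormedAddCommGroup E] [InnerProductSpace ℂ E]

theorem norm_sub_exp_I_mul_smul_sq {x e : E} (hx : ‖x‖ = 1) (he : ‖e‖ = 1) :
    ‖x - exp (I * arg ⟪e, x⟫_ℂ) • e‖ ^ 2 = 2 - 2 * ‖⟪e, x⟫_ℂ‖ := by
  have hphase : ‖exp (I * arg ⟪e, x⟫_ℂ)‖ = 1 := by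
    rw [mul_comm]; exact norm_exp_ofReal_mul_I _
  have hre : re ⟪x, exp (I * arg ⟪e, x⟫_ℂ) • e⟫_ℂ = ‖⟪e, x⟫_ℂ‖ := by
    rw [inner_smul_right, ← inner_conj_symm x e, mul_comm I, exp_arg_mul_I_mul_conj, ofReal_re]
  rw [norm_sub_sq (𝕜 := ℂ), RCLike.re_to_complex, hre, norm_smul, hphase, hx, he]
  ring

theorem exists_norm_sub_exp_I_mul_smul_le {x e : E} (hx : ‖x‖ = 1) (he : ‖e‖ = 1) {ε : ℝ}
    (hε : 0 ≤ ε) (h : 1 - ε ^ 2 ≤ ‖⟪e, x⟫_ℂ‖ ^ 2) :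
    ∃ α ∈ Set.Ico 0 (2 * Real.pi), ‖x - exp (I * α) • e‖ ≤ Real.sqrt 2 * ε := by
  obtain ⟨α, hα, hexp⟩ := exists_mem_Ico_exp_I_mul_eq (arg ⟪e, x⟫_ℂ)
  refine ⟨α, hα, ?_⟩
  have hc : ‖⟪e, x⟫_ℂ‖ ≤ 1 := by simpa [hx, he] using norm_inner_le_norm (𝕜 := ℂ) e x
  have hsq : ‖x - exp (I * α) • e‖ ^ 2 ≤ (Real.sqrt 2 * ε) ^ 2 := by
    rw [hexp, norm_sub_exp_I_mul_smul_sq hx he, mul_pow, Real.sq_sqrt zero_le_two]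
    nlinarith [norm_nonneg ⟪e, x⟫_ℂ]
  exact le_of_pow_le_pow_left₀ two_ne_zero (by positivity) hsq

end Phase

theorem EuclideanSpace.star_dotProduct_eq_inner {𝕜 ι : Type*} [RCLike 𝕜] [Fintype ι]
    (u v : ι → 𝕜) : star u ⬝ᵥ v = ⟪WithLp.toLp 2 u, WithLp.toLp 2 v⟫_𝕜 := by
  rw [EuclideanSpace.inner_toLp_toLp, dotProduct_comm]

theorem cvecNorm_eq_norm_toLp {n : ℕ} (x : Fin n → ℂ) : cvecNorm x = ‖WithLp.toLp 2 x‖ := by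
  rw [EuclideanSpace.norm_eq]
  rfl

theorem norm_toEuclideanLin_le {m n : ℕ} (N : Matrix (Fin m) (Fin n) ℂ)
    (x : EuclideanSpace ℂ (Fin n)) : ‖Matrix.toEuclideanLin N x‖ ≤ specNorm N * ‖x‖ :=
  (LinearMap.toContinuousLinearMap (Matrix.toEuclideanLin N)).le_opNorm x

theorem norm_toEuclideanLin_le_of_mulVec_eq_zero {n : ℕ} {M : Matrix (Fin n) (Fin n) ℂ}
    {v : Fin n → ℂ} (hMv : M.mulVec v = 0) (Mt : Matrix (Fin n) (Fin n) ℂ) :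
    ‖Matrix.toEuclideanLin Mt (WithLp.toLp 2 v)‖ ≤ specNorm (M - Mt) * ‖WithLp.toLp 2 v‖ := calc
  _ = ‖Matrix.toEuclideanLin (M - Mt) (WithLp.toLp 2 v)‖ := by
    rw [map_sub, LinearMap.sub_apply, Matrix.toLpLin_toLp (A := M), Matrix.toLin'_apply, hMv,
      WithLp.toLp_zero, zero_sub, norm_neg]
  _ ≤ _ := norm_toEuclideanLin_le _ _

theorem exists_orthonormalBasis_toLp {𝕜 ι : Type*} [RCLike 𝕜] [Fintype ι] [DecidableEq ι]
    {v : ι → ι → 𝕜} (hv : ∀ k l, star (v k) ⬝ᵥ v l = if k = l then 1 else 0) :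
    ∃ b : OrthonormalBasis ι 𝕜 (EuclideanSpace 𝕜 ι), ∀ k, b k = WithLp.toLp 2 (v k) := by
  have hon : Orthonormal 𝕜 fun k => WithLp.toLp 2 (v k) := orthonormal_iff_ite.2 fun k l => by
    rw [← EuclideanSpace.star_dotProduct_eq_inner, hv]
  exact ⟨.mk hon (hon.linearIndependent.span_eq_top_of_card_eq_finrank' (by simp)).ge,
    congrFun (OrthonormalBasis.coe_mk _ _)⟩

theorem Fin.one_le_iff_ne_mk_zero {n : ℕ} (h : 0 < n) (k : Fin n) :
    1 ≤ (k : ℕ) ↔ k ≠ ⟨0, h⟩ := by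
  simp [Fin.ext_iff, Nat.one_le_iff_ne_zero]

theorem stmt_18 {n : ℕ} (hn : 2 ≤ n)
    (M Mt : Matrix (Fin n) (Fin n) ℂ)
    (δ : ℝ)
    (hclose : specNorm (M - Mt) ≤ δ)
    -- a unit vector in the kernel of M
    (v₁ : Fin n → ℂ) (hv₁ : cvecNorm v₁ = 1) (hMv : M.mulVec v₁ = 0)
    -- the eigenvalues of Mt, sorted increasingly, with orthonormal eigenvectors
    (lam : Fin n → ℝ)
    (vt : Fin n → Fin n → ℂ)
    (hortho : ∀ k l, dotProduct (star (vt k)) (vt l) = if k = l then 1 else 0)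
    (heig : ∀ k, Mt.mulVec (vt k) = ((lam k : ℝ) : ℂ) • vt k)
    -- assumption : 0 < λ̃₂ ≤ |λ̃ₖ| for all k ≥ 2
    (hpos : 0 < lam ⟨1, by omega⟩)
    (hlb : ∀ k : Fin n, 1 ≤ (k : ℕ) → lam ⟨1, by omega⟩ ≤ |lam k|) :
    (∑ k ∈ Finset.univ.filter (fun k : Fin n => 1 ≤ (k : ℕ)),
        ‖dotProduct (star (vt k)) v₁‖ ^ 2 ≤
      δ ^ 2 / lam ⟨1, by omega⟩ ^ 2) ∧
    (1 - δ ^ 2 / lam ⟨1, by omega⟩ ^ 2 ≤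
      ‖dotProduct (star (vt ⟨0, by omega⟩)) v₁‖ ^ 2) ∧
    (δ ≤ lam ⟨1, by omega⟩ →
      ∃ α ∈ Set.Ico (0 : ℝ) (2 * Real.pi),
        cvecNorm (fun i => v₁ i - Complex.exp (Complex.I * α) * vt ⟨0, by omega⟩ i) ≤
          Real.sqrt 2 * δ / lam ⟨1, by omega⟩) := by
  obtain ⟨b, hb⟩ := exists_orthonormalBasis_toLp hortho
  have hcoeff : ∀ k y, star (vt k) ⬝ᵥ y = ⟪b k, WithLp.toLp 2 y⟫_ℂ := fun k y => by
    rw [hb, EuclideanSpace.star_dotProduct_eq_inner]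
  have hT : ∀ k, Matrix.toEuclideanLin Mt (b k) = (lam k : ℂ) • b k := fun k => by
    rw [hb, Matrix.toLpLin_toLp, Matrix.toLin'_apply, heig, WithLp.toLp_smul]
  have hx : ‖WithLp.toLp 2 v₁‖ = 1 := by rw [← cvecNorm_eq_norm_toLp, hv₁]
  have hTx : ‖Matrix.toEuclideanLin Mt (WithLp.toLp 2 v₁)‖ ≤ δ := by
    have h := norm_toEuclideanLin_le_of_mulVec_eq_zero hMv Mt
    rw [hx, mul_one] at h
    exact h.trans hclose
  have hgap : ∑ k ∈ Finset.univ.erase ⟨0, by omega⟩, ‖⟪b k, WithLp.toLp 2 v₁⟫_ℂ‖ ^ 2 ≤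
      δ ^ 2 / lam ⟨1, by omega⟩ ^ 2 := by
    refine (b.sum_erase_sq_norm_inner_le_of_apply_eq_smul hT _ hpos fun k hk => ?_).trans ?_
    · simpa using hlb k ((Fin.one_le_iff_ne_mk_zero _ k).2 hk)
    · gcongr
  have hlead : 1 - δ ^ 2 / lam ⟨1, by omega⟩ ^ 2 ≤ ‖⟪b ⟨0, by omega⟩, WithLp.toLp 2 v₁⟫_ℂ‖ ^ 2 := by
    have h := b.sum_erase_sq_norm_inner (WithLp.toLp 2 v₁) ⟨0, by omega⟩
    rw [hx, one_pow] at h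
    linarith
  refine ⟨?_, by simpa [hcoeff] using hlead, fun _ => ?_⟩
  · simpa [Fin.one_le_iff_ne_mk_zero (by omega : 0 < n), Finset.filter_ne', hcoeff] using hgap
  obtain ⟨α, hα, hle⟩ := exists_norm_sub_exp_I_mul_smul_le hx (b.norm_eq_one _)
    (div_nonneg ((norm_nonneg _).trans hTx) hpos.le) (by rwa [div_pow])
  rw [hb] at hle
  exact ⟨α, hα, by rwa [cvecNorm_eq_norm_toLp, mul_div_assoc]⟩
end
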